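/- Let G be a free group with free generators a_1,…,a_N, and let H_Λ be the Hilbert space with orthonormal basis {e_{(g,h)} : g⁻¹h = a_j for some j}, with the convention e_{(g,h)} = −e_{(h,g)} when g⁻¹h = a_j⁻¹. Define Φ(g) = e_{(f_0,f_1)} + ⋯ + e_{(f_{n−1},f_n)} where g = g_1⋯g_n is the reduced word for g, f_0 = e, and f_{ℓ−1}⁻¹f_ℓ = g_ℓ. Then ‖Φ(g) − Φ(h)‖²_{H_Λ} = |h⁻¹g| for all g, h ∈ G; in particular Φ is injective. -/

import Mathlib

/-!
Index the edges of the geodesic from `1` to `g` by the steps `(u, x)` of the reduced word of `g`,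
where `u` is the vertex reached before the letter `x`. Distinct steps of reduced words cross
distinct edges of the Cayley tree, so `Φ g` is a sum of `±e` over `|g|` orthonormal vectors, and
`‖Φ g - Φ h‖² = |g| + |h| - 2c`, where `c` counts the steps shared by `g` and `h`, i.e. the length
of the longest common prefix of their reduced words. Cancelling this common prefix in
`h⁻¹ g` leaves a reduced word, so `|h⁻¹ g| = |g| + |h| - 2c` as well.
-/

open scoped InnerProductSpace

/-- The edges of the Cayley-tree geodesic from the identity to `g` in the free group on
`N` generators that are traversed in the direction of a generator: pairs `(u, j)` such
that the geodesic passes from `u` to `u·aⱼ` (i.e. `|u| + 1 + |(u aⱼ)⁻¹ g| = |g|`).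
These are the pairs `(f_{ℓ−1}, f_ℓ)` of the prefix sequence of the reduced word of `g`
with `f_{ℓ−1}⁻¹ f_ℓ = aⱼ`, contributing `+e_{(f_{ℓ−1},f_ℓ)}` to `Φ(g)`. -/
def fwdEdges (N : ℕ) (g : FreeGroup (Fin N)) : Set (FreeGroup (Fin N) × Fin N) :=
  {p | FreeGroup.norm p.1 + 1 + FreeGroup.norm ((p.1 * FreeGroup.of p.2)⁻¹ * g)
        = FreeGroup.norm g}

/-- The edges of the geodesic from the identity to `g` traversed in the direction of an
inverse generator: pairs `(u, j)` such that the geodesic passes from `u·aⱼ` to `u`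
(i.e. `|u·aⱼ| + 1 + |u⁻¹ g| = |g|`).  These are the pairs `(f_{ℓ−1}, f_ℓ)` with
`f_{ℓ−1}⁻¹ f_ℓ = aⱼ⁻¹`; by the convention `e_{(g,h)} = −e_{(h,g)}` they contribute
`−e_{(u, u·aⱼ)}` to `Φ(g)`. -/
def bwdEdges (N : ℕ) (g : FreeGroup (Fin N)) : Set (FreeGroup (Fin N) × Fin N) :=
  {p | FreeGroup.norm (p.1 * FreeGroup.of p.2) + 1 + FreeGroup.norm (p.1⁻¹ * g)
        = FreeGroup.norm g}

namespace List

variable {β : Type*} [DecidableEq β]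

def commonPrefix : List β → List β → List β
  | a :: s, b :: t => if a = b then a :: commonPrefix s t else []
  | _, _ => []

theorem prefix_commonPrefix_iff {u : List β} :
    ∀ {s t : List β}, u <+: commonPrefix s t ↔ u <+: s ∧ u <+: t
  | [], t => by cases u <;> simp [commonPrefix]
  | a :: s, [] => by cases u <;> simp [commonPrefix]
  | a :: s, b :: t => by
    cases u with
    | nil => simp
    | cons c u =>
      by_cases hab : a = b
      · subst hab
        simp only [commonPrefix, ↓reduceIte, cons_prefix_cons, prefix_commonPrefix_iff]
        tauto
      · simp only [commonPrefix, if_neg hab, prefix_nil, reduceCtorEq, cons_prefix_cons,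
          false_iff]
        rintro ⟨⟨rfl, -⟩, rfl, -⟩
        exact hab rfl

end List

namespace FreeGroup

open List

variable {α : Type*} {L : List (α × Bool)}

theorem mk_invRev_append (L₁ L₂ : List (α × Bool)) :
    mk (invRev L₂ ++ L₁) = (mk L₂)⁻¹ * mk L₁ := by
  rw [inv_mk, mul_mk]

def stepSign (q : FreeGroup α × (α × Bool)) : ℝ :=
  if q.2.2 then 1 else -1

theorem stepSign_mul_self (q : FreeGroup α × (α × Bool)) : stepSign q * stepSign q = 1 := by
  unfold stepSign; split_ifs <;> norm_num

variable [DecidableEq α]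

theorem IsReduced.toWord_mk (h : IsReduced L) : (mk L).toWord = L := by
  rw [FreeGroup.toWord_mk, h.reduce_eq]

theorem IsReduced.norm_mk (h : IsReduced L) : norm (mk L) = L.length := by
  rw [norm, h.toWord_mk]

theorem IsReduced.invRev (h : IsReduced L) : IsReduced (invRev L) := by
  rw [← h.toWord_mk, ← toWord_inv]
  exact isReduced_toWord

theorem toWord_mul_mk {u : FreeGroup α} (h : IsReduced (u.toWord ++ L)) :
    (u * mk L).toWord = u.toWord ++ L := by
  rw [← h.toWord_mk, ← mul_mk, mk_toWord]

theorem IsReduced.invRev_cons_append_cons {a b : α × Bool} {s t : List (α × Bool)}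
    (h₁ : IsReduced (a :: s)) (h₂ : IsReduced (b :: t)) (hab : a ≠ b) :
    IsReduced (FreeGroup.invRev (b :: t) ++ a :: s) := by
  have h₂' := h₂.invRev
  have hinv : FreeGroup.invRev (b :: t) = FreeGroup.invRev t ++ [(b.1, !b.2)] := by
    simp [FreeGroup.invRev]
  rw [hinv] at h₂' ⊢
  refine h₂'.append_overlap ?_ (cons_ne_nil _ _)
  rw [singleton_append, isReduced_cons_cons]
  refine ⟨fun h => ?_, h₁⟩
  obtain ⟨a₁, a₂⟩ := a
  obtain ⟨b₁, b₂⟩ := b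
  simp only at h ⊢
  subst h
  cases a₂ <;> cases b₂ <;> simp_all

theorem norm_mk_invRev_append_add : ∀ {L₁ L₂ : List (α × Bool)}, IsReduced L₁ → IsReduced L₂ →
    norm (mk (invRev L₂ ++ L₁)) + 2 * (commonPrefix L₁ L₂).length = L₁.length + L₂.length
  | [], L₂, _, h₂ => by simp [commonPrefix, h₂.invRev.norm_mk, invRev_length]
  | a :: s, [], h₁, _ => by simp [commonPrefix, h₁.norm_mk]
  | a :: s, b :: t, h₁, h₂ => by
    by_cases hab : a = b
    · subst hab
      have ih := norm_mk_invRev_append_add (h₁.infix (suffix_cons a s).isInfix)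
        (h₂.infix (suffix_cons a t).isInfix)
      have hcancel : mk (invRev (a :: t) ++ a :: s) = mk (invRev t ++ s) := by
        have hcons : ∀ l, mk (a :: l) = mk [a] * mk l := fun l => (mul_mk (L₁ := [a])).symm
        rw [mk_invRev_append, mk_invRev_append, hcons t, hcons s]
        group
      simp only [commonPrefix, if_true, length_cons, hcancel]
      omega
    · have hred := IsReduced.invRev_cons_append_cons h₁ h₂ hab
      simp only [commonPrefix, if_neg hab, hred.norm_mk, length_append, invRev_length,
        length_cons, length_nil]
      omega

theorem norm_inv_mul_add_two_mul_length_commonPrefix (g h : FreeGroup α) :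
    norm (h⁻¹ * g) + 2 * (commonPrefix g.toWord h.toWord).length = norm g + norm h := by
  have hmk := mk_invRev_append g.toWord h.toWord
  rw [mk_toWord, mk_toWord] at hmk
  rw [← hmk]
  exact norm_mk_invRev_append_add isReduced_toWord isReduced_toWord

theorem norm_add_norm_inv_mul_eq_iff_prefix {u g : FreeGroup α} :
    norm u + norm (u⁻¹ * g) = norm g ↔ u.toWord <+: g.toWord := by
  constructor
  · intro h
    have hsub := toWord_mul_sublist u (u⁻¹ * g)
    rw [mul_inv_cancel_left] at hsub
    exact ⟨_, (hsub.eq_of_length (by rw [length_append]; exact h.symm)).symm⟩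
  · rintro ⟨t, ht⟩
    have ht_red : IsReduced t := isReduced_toWord.infix ⟨u.toWord, [], by rw [append_nil, ht]⟩
    have hg : u * mk t = g := by rw [← mk_toWord (x := u), mul_mk, ht, mk_toWord]
    rw [← hg, inv_mul_cancel_left, ht_red.norm_mk, hg, norm, norm, ← ht, length_append]

theorem norm_add_one_add_norm_inv_mul_eq_iff_prefix {u g : FreeGroup α} {x : α × Bool} :
    norm u + 1 + norm ((u * mk [x])⁻¹ * g) = norm g ↔ u.toWord ++ [x] <+: g.toWord := by
  set v := u * mk [x]
  constructor
  · intro h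
    have hv : norm v ≤ norm u + 1 := (norm_mul_le _ _).trans (by simpa using norm_mk_le (L₁ := [x]))
    have hg : norm g ≤ norm v + norm (v⁻¹ * g) := by
      simpa using norm_mul_le v (v⁻¹ * g)
    have hsub : v.toWord <+ u.toWord ++ [x] := by
      simpa [IsReduced.singleton.toWord_mk] using toWord_mul_sublist u (mk [x])
    rw [← hsub.eq_of_length (by
      rw [length_append, length_singleton]; change norm v = norm u + 1; omega)]
    exact norm_add_norm_inv_mul_eq_iff_prefix.mp (by omega)
  · intro hx
    have hv : v.toWord = u.toWord ++ [x] := toWord_mul_mk (isReduced_toWord.infix hx.isInfix)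
    have := norm_add_norm_inv_mul_eq_iff_prefix.mpr (hv ▸ hx)
    simp only [norm, hv, length_append, length_singleton] at this ⊢
    omega

-- The Cayley-tree edge crossed by the step from `q.1` along the letter `q.2`, named as in
-- `fwdEdges` and `bwdEdges` by the endpoint `v` whose other endpoint is `v * of j`.
def stepEdge (q : FreeGroup α × (α × Bool)) : FreeGroup α × α :=
  (if q.2.2 then q.1 else q.1 * mk [q.2], q.2.1)

def geodesicSteps (w : List (α × Bool)) : Finset (FreeGroup α × (α × Bool)) :=
  Finset.univ.image fun k : Fin w.length => (mk (w.take k), w[(k : ℕ)])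

variable {w w₁ w₂ : List (α × Bool)}

theorem mem_geodesicSteps (hw : IsReduced w) {q : FreeGroup α × (α × Bool)} :
    q ∈ geodesicSteps w ↔ q.1.toWord ++ [q.2] <+: w := by
  obtain ⟨u, x⟩ := q
  simp only [geodesicSteps, Finset.mem_image, Finset.mem_univ, true_and, Prod.mk.injEq]
  constructor
  · rintro ⟨k, rfl, rfl⟩
    rw [(hw.infix (take_prefix k w).isInfix).toWord_mk, take_append_getElem]
    exact take_prefix _ _
  · rintro ⟨t, rfl⟩
    refine ⟨⟨u.toWord.length, by simp⟩, ?_, by simp⟩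
    simp [mk_toWord]

theorem card_geodesicSteps (hw : IsReduced w) : (geodesicSteps w).card = w.length := by
  rw [geodesicSteps, Finset.card_image_of_injective _ ?_, Finset.card_univ, Fintype.card_fin]
  intro k l hkl
  have := congrArg (fun q => q.1.toWord.length) hkl
  simp only [(hw.infix (take_prefix _ w).isInfix).toWord_mk, length_take] at this
  ext
  omega

theorem card_geodesicSteps_inter (h₁ : IsReduced w₁) (h₂ : IsReduced w₂) :
    (geodesicSteps w₁ ∩ geodesicSteps w₂).card = (commonPrefix w₁ w₂).length := by
  have hc : IsReduced (commonPrefix w₁ w₂) :=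
    h₁.infix (prefix_commonPrefix_iff.mp (prefix_refl _)).1.isInfix
  rw [← card_geodesicSteps hc]
  congr 1
  ext q
  rw [Finset.mem_inter, mem_geodesicSteps h₁, mem_geodesicSteps h₂, mem_geodesicSteps hc,
    prefix_commonPrefix_iff]

theorem coe_geodesicSteps_subset (hw : IsReduced w) :
    (geodesicSteps w : Set (FreeGroup α × (α × Bool))) ⊆ {q | IsReduced (q.1.toWord ++ [q.2])} :=
  fun _ hq => hw.infix ((mem_geodesicSteps hw).mp hq).isInfix

theorem norm_mul_mk_singleton {u : FreeGroup α} {x : α × Bool} (h : IsReduced (u.toWord ++ [x])) :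
    norm (u * mk [x]) = norm u + 1 := by
  rw [norm, toWord_mul_mk h, length_append, length_singleton, norm]

-- A forward and a backward step crossing the same edge would each lengthen the word, but in
-- opposite directions along that edge.
theorem stepEdge_injOn :
    Set.InjOn stepEdge {q : FreeGroup α × (α × Bool) | IsReduced (q.1.toWord ++ [q.2])} := by
  rintro ⟨u, j, b⟩ (hu : IsReduced (u.toWord ++ [(j, b)])) ⟨u', j', b'⟩
    (hu' : IsReduced (u'.toWord ++ [(j', b')])) heq
  simp only [stepEdge, Prod.mk.injEq] at heq
  obtain ⟨hvert, rfl⟩ := heq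
  have hnu := norm_mul_mk_singleton hu
  have hnu' := norm_mul_mk_singleton hu'
  have hinv : mk [(j, false)] * mk [(j, true)] = 1 := inv_mul_cancel (of j)
  cases b <;> cases b' <;> simp only [Bool.false_eq_true, if_true, if_false] at hvert
  · rw [mul_right_cancel hvert]
  · subst hvert
    rw [mul_assoc, hinv, mul_one] at hnu'
    omega
  · subst hvert
    rw [mul_assoc, hinv, mul_one] at hnu
    omega
  · rw [hvert]

end FreeGroup

open FreeGroup

theorem Orthonormal.inner_sum_smul_of_injOn {ι κ H : Type*} [NormedAddCommGroup H]
    [InnerProductSpace ℝ H] [DecidableEq ι] {e : κ → H} (he : Orthonormal ℝ e) {f : ι → κ}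
    {s t : Finset ι} (hf : Set.InjOn f ↑(s ∪ t)) (c : ι → ℝ) :
    ⟪∑ i ∈ s, c i • e (f i), ∑ i ∈ t, c i • e (f i)⟫_ℝ = ∑ i ∈ s ∩ t, c i * c i := by
  have hterm : ∀ i ∈ s, ⟪c i • e (f i), ∑ j ∈ t, c j • e (f j)⟫_ℝ =
      if i ∈ t then c i * c i else 0 := by
    intro i hi
    have hij : ∀ j ∈ t, ⟪c i • e (f i), c j • e (f j)⟫_ℝ = if i = j then c i * c j else 0 := by
      intro j hj
      have hfij : f i = f j ↔ i = j :=
        hf.eq_iff (by simp [hi]) (by simp [hj])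
      classical
      simp only [real_inner_smul_left, real_inner_smul_right, orthonormal_iff_ite.mp he, hfij]
      split_ifs <;> ring
    rw [inner_sum, Finset.sum_congr rfl hij, Finset.sum_ite_eq]
  rw [sum_inner, Finset.sum_congr rfl hterm, Finset.sum_ite_mem]

theorem Orthonormal.norm_sum_smul_sub_sum_smul_sq {ι κ H : Type*} [NormedAddCommGroup H]
    [InnerProductSpace ℝ H] [DecidableEq ι] {e : κ → H} (he : Orthonormal ℝ e) {f : ι → κ}
    {s t : Finset ι} (hf : Set.InjOn f ↑(s ∪ t)) {c : ι → ℝ} (hc : ∀ i, c i * c i = 1) :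
    ‖∑ i ∈ s, c i • e (f i) - ∑ i ∈ t, c i • e (f i)‖ ^ 2 =
      s.card + t.card - 2 * (s ∩ t).card := by
  have hinner : ∀ {s' t'}, s' ∪ t' ⊆ s ∪ t →
      ⟪∑ i ∈ s', c i • e (f i), ∑ i ∈ t', c i • e (f i)⟫_ℝ = (s' ∩ t').card := by
    intro s' t' hsub
    rw [he.inner_sum_smul_of_injOn (hf.mono (by exact_mod_cast hsub)), Finset.sum_congr rfl
      (fun i _ => hc i), Finset.sum_const, nsmul_one]
  rw [norm_sub_sq_real, ← real_inner_self_eq_norm_sq, ← real_inner_self_eq_norm_sq,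
    hinner (by simp), hinner le_rfl, hinner (by simp), Finset.inter_self, Finset.inter_self]
  ring

theorem fwdEdges_eq_image (N : ℕ) (g : FreeGroup (Fin N)) :
    fwdEdges N g = ((geodesicSteps g.toWord).filter (fun q => q.2.2 = true)).image stepEdge := by
  ext ⟨u, j⟩
  simp only [Finset.coe_image, Finset.coe_filter, mem_geodesicSteps isReduced_toWord]
  constructor
  · intro h
    exact ⟨(u, j, true), ⟨norm_add_one_add_norm_inv_mul_eq_iff_prefix.mp h, rfl⟩, rfl⟩
  · rintro ⟨⟨v, i, b⟩, ⟨hstep, rfl⟩, hedge⟩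
    simp only [stepEdge, if_true, Prod.mk.injEq] at hedge
    obtain ⟨rfl, rfl⟩ := hedge
    exact norm_add_one_add_norm_inv_mul_eq_iff_prefix.mpr hstep

theorem bwdEdges_eq_image (N : ℕ) (g : FreeGroup (Fin N)) :
    bwdEdges N g = ((geodesicSteps g.toWord).filter (fun q => ¬q.2.2 = true)).image stepEdge := by
  have hcancel : ∀ (u : FreeGroup (Fin N)) j, u * of j * mk [(j, false)] = u :=
    fun u j => mul_inv_cancel_right u (of j)
  have hcancel' : ∀ (u : FreeGroup (Fin N)) j, u * mk [(j, false)] * of j = u :=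
    fun u j => inv_mul_cancel_right u (of j)
  ext ⟨u, j⟩
  simp only [Finset.coe_image, Finset.coe_filter, mem_geodesicSteps isReduced_toWord]
  constructor
  · intro h
    refine ⟨(u * of j, j, false), ⟨norm_add_one_add_norm_inv_mul_eq_iff_prefix.mp ?_, by simp⟩, ?_⟩
    · rwa [hcancel]
    · simp [stepEdge, hcancel]
  · rintro ⟨⟨v, i, b⟩, ⟨hstep, hb⟩, hedge⟩
    simp only [Bool.not_eq_true] at hb
    subst hb
    simp only [stepEdge, Bool.false_eq_true, if_false, Prod.mk.injEq] at hedge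
    obtain ⟨rfl, rfl⟩ := hedge
    have := norm_add_one_add_norm_inv_mul_eq_iff_prefix.mpr hstep
    simpa only [bwdEdges, Set.mem_ofPred_eq, hcancel'] using this

theorem finsum_fwdEdges_sub_finsum_bwdEdges {H : Type*} [AddCommGroup H] [Module ℝ H] (N : ℕ)
    (e : FreeGroup (Fin N) × Fin N → H) (g : FreeGroup (Fin N)) :
    (∑ᶠ p ∈ fwdEdges N g, e p) - ∑ᶠ p ∈ bwdEdges N g, e p =
      ∑ q ∈ geodesicSteps g.toWord, stepSign q • e (stepEdge q) := by
  have hinj : ∀ {P : _ → Prop} [DecidablePred P],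
      Set.InjOn (stepEdge (α := Fin N)) ↑((geodesicSteps g.toWord).filter P) := fun {_ _} =>
    stepEdge_injOn.mono <| (Finset.coe_subset.mpr (Finset.filter_subset _ _)).trans
      (coe_geodesicSteps_subset isReduced_toWord)
  rw [fwdEdges_eq_image, bwdEdges_eq_image, finsum_mem_coe_finset, finsum_mem_coe_finset,
    Finset.sum_image hinj, Finset.sum_image hinj,
    ← Finset.sum_filter_add_sum_filter_not _ (fun q => q.2.2 = true)
      (fun q => stepSign q • e (stepEdge q)), sub_eq_add_neg,
    ← Finset.sum_neg_distrib]
  congr 1 <;> refine Finset.sum_congr rfl fun q hq => ?_ <;>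
    simp_all [stepSign]

theorem haagerup_map_dist_sq_general (N : ℕ)
    {H : Type*} [NormedAddCommGroup H] [InnerProductSpace ℝ H]
    (e : FreeGroup (Fin N) × Fin N → H) (he : Orthonormal ℝ e)
    (Φ : FreeGroup (Fin N) → H)
    (hΦ : ∀ g, Φ g = (∑ᶠ p ∈ fwdEdges N g, e p) - ∑ᶠ p ∈ bwdEdges N g, e p) :
    (∀ g h : FreeGroup (Fin N),
      ‖Φ g - Φ h‖ ^ 2 = (FreeGroup.norm (h⁻¹ * g) : ℝ)) ∧
    Function.Injective Φ := by
  have hdist : ∀ g h : FreeGroup (Fin N), ‖Φ g - Φ h‖ ^ 2 = (norm (h⁻¹ * g) : ℝ) := by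
    intro g h
    have hinj : Set.InjOn (stepEdge (α := Fin N))
        ↑(geodesicSteps g.toWord ∪ geodesicSteps h.toWord) := by
      rw [Finset.coe_union]
      exact stepEdge_injOn.mono (Set.union_subset (coe_geodesicSteps_subset isReduced_toWord)
        (coe_geodesicSteps_subset isReduced_toWord))
    have htree := norm_inv_mul_add_two_mul_length_commonPrefix g h
    rw [hΦ, hΦ, finsum_fwdEdges_sub_finsum_bwdEdges, finsum_fwdEdges_sub_finsum_bwdEdges,
      he.norm_sum_smul_sub_sum_smul_sq hinj stepSign_mul_self,
      card_geodesicSteps_inter isReduced_toWord isReduced_toWord,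
      card_geodesicSteps isReduced_toWord, card_geodesicSteps isReduced_toWord]
    have htree_real : (norm (h⁻¹ * g) : ℝ) + 2 * (g.toWord.commonPrefix h.toWord).length =
        g.toWord.length + h.toWord.length := by exact_mod_cast htree
    linarith
  refine ⟨hdist, fun g h hgh => ?_⟩
  have hzero : (norm (h⁻¹ * g) : ℝ) = 0 := by
    rw [← hdist, hgh, sub_self, norm_zero, sq, mul_zero]
  exact (inv_mul_eq_one.mp (norm_eq_zero.mp (by exact_mod_cast hzero))).symm

/-- Haagerup's construction: let `{e_{(u,j)}}` be an orthonormal family in a real Hilbert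
space `H_Λ` indexed by the edges `Λ` of the Cayley tree of the free group `G` on `N`
generators (with the convention `e_{(g,h)} = −e_{(h,g)}` when `g⁻¹h` is an inverse
generator), and let `Φ(g) = e_{(f₀,f₁)} + ⋯ + e_{(f_{n−1},f_n)}` where `f₀ = 1,
f_ℓ = g₁⋯g_ℓ` is the prefix sequence of the reduced word `g = g₁⋯g_n`.  Then
`‖Φ(g) − Φ(h)‖² = |h⁻¹ g|` for all `g, h`; in particular `Φ` is injective. -/
theorem haagerup_map_dist_sq (N : ℕ)
    {H : Type*} [NormedAddCommGroup H] [InnerProductSpace ℝ H] [CompleteSpace H]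
    (e : FreeGroup (Fin N) × Fin N → H) (he : Orthonormal ℝ e)
    (Φ : FreeGroup (Fin N) → H)
    (hΦ : ∀ g, Φ g = (∑ᶠ p ∈ fwdEdges N g, e p) - ∑ᶠ p ∈ bwdEdges N g, e p) :
    (∀ g h : FreeGroup (Fin N),
      ‖Φ g - Φ h‖ ^ 2 = (FreeGroup.norm (h⁻¹ * g) : ℝ)) ∧
    Function.Injective Φ :=
  haagerup_map_dist_sq_general N e he Φ hΦ
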